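/- Let V be a finite-dimensional real vector space with a quadratic form q, and let W_0, W_0' be subspaces with V = W_0 ⊕ W_0', q nonnegative on W_0 and nonpositive on W_0'. Let W_1 be a subspace of the same dimension as W_0 with W_1 ∩ W_0' = {0} and q nonnegative on W_1. Define F : W_0 → W_0' by F = π_{W_0'} ∘ (π_{W_0}|_{W_1})^{-1}, and φ_t(v) = v + t·F(v) for t ∈ [0,1]. Then for every t ∈ [0,1], φ_t is linear and injective, q is nonnegative on φ_t(W_0), φ_0 = id_{W_0}, and φ_1(W_0) = W_1. -/

import Mathlib

private lemma aux_quad (a b c t : ℝ) (ha : 0 ≤ a) (hc : c ≤ 0) (hs : 0 ≤ a + b + c)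
    (ht0 : 0 ≤ t) (ht1 : t ≤ 1) : 0 ≤ a + t * b + t * t * c := by
  nlinarith [mul_nonneg ht0 (sub_nonneg.2 ht1), mul_nonneg ht0 (neg_nonneg.2 hc),
    mul_nonneg (sub_nonneg.2 ht1) (mul_nonneg ht0 (neg_nonneg.2 hc)), mul_nonneg ht0 hs]

/-- Interpolation of nonnegative subspaces (Lemma `l:deformadmissbc`, paper
"Møller operators and Hadamard states for Dirac fields with MIT boundary
conditions"). Given `V = W₀ ⊕ W₀'` with `q ≥ 0` on `W₀`, `q ≤ 0` on `W₀'`,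
and `W₁` of the same dimension as `W₀` with `W₁ ∩ W₀' = 0` and `q ≥ 0` on
`W₁`, the map `F = π_{W₀'} ∘ (π_{W₀}|_{W₁})⁻¹` (characterized by
`v + F v ∈ W₁`) yields for each `t ∈ [0,1]` an injective linear map
`φ_t : v ↦ v + t • F v` with `q ≥ 0` on its image, `φ₀ = id` and
`φ₁(W₀) = W₁`. -/
theorem stmt_0
    {V : Type*} [AddCommGroup V] [Module ℝ V] [FiniteDimensional ℝ V]
    (q : QuadraticForm ℝ V)
    (W0 W0' W1 : Submodule ℝ V)
    (hcompl : IsCompl W0 W0')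
    (hq0 : ∀ v ∈ W0, 0 ≤ q v)
    (hq0' : ∀ v ∈ W0', q v ≤ 0)
    (hdim : Module.finrank ℝ W1 = Module.finrank ℝ W0)
    (hint : W1 ⊓ W0' = ⊥)
    (hq1 : ∀ v ∈ W1, 0 ≤ q v) :
    ∃ F : W0 →ₗ[ℝ] W0',
      (∀ v : W0, (v : V) + (F v : V) ∈ W1) ∧
      (∀ t ∈ Set.Icc (0 : ℝ) 1,
        Function.Injective (fun v : W0 => (v : V) + t • (F v : V)) ∧
        ∀ v : W0, 0 ≤ q ((v : V) + t • (F v : V))) ∧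
      (∀ v : W0, (v : V) + (0 : ℝ) • (F v : V) = (v : V)) ∧
      Set.range (fun v : W0 => (v : V) + (1 : ℝ) • (F v : V)) = (W1 : Set V) := by
  classical
  set p0 : V →ₗ[ℝ] W0 := W0.linearProjOfIsCompl W0' hcompl with hp0
  set p0' : V →ₗ[ℝ] W0' := W0'.linearProjOfIsCompl W0 hcompl.symm with hp0'
  set e : W1 →ₗ[ℝ] W0 := p0 ∘ₗ W1.subtype with he
  have he_inj : Function.Injective e := by
    rw [← LinearMap.ker_eq_bot]
    ext w
    simp only [LinearMap.mem_ker, Submodule.mem_bot, he, LinearMap.comp_apply,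
      Submodule.subtype_apply, hp0]
    constructor
    · intro hw
      have h1 : (w : V) ∈ W0' := (Submodule.linearProjOfIsCompl_apply_eq_zero_iff hcompl).1 hw
      have : (w : V) ∈ W1 ⊓ W0' := ⟨w.2, h1⟩
      rw [hint] at this
      exact Subtype.ext (by simpa using this)
    · rintro rfl; simp
  set E : W1 ≃ₗ[ℝ] W0 := e.linearEquivOfInjective he_inj hdim with hE
  set F : W0 →ₗ[ℝ] W0' := p0' ∘ₗ W1.subtype ∘ₗ (E.symm : W0 →ₗ[ℝ] W1) with hF
  have hkey : ∀ v : W0, (v : V) + (F v : V) = ((E.symm v : W1) : V) := by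
    intro v
    have hd : ((p0 ((E.symm v : W1) : V) : W0) : V) + (p0' ((E.symm v : W1) : V) : V)
        = ((E.symm v : W1) : V) := by
      have := Submodule.projection_add_projection_eq_self hcompl ((E.symm v : W1) : V)
      exact this
    have hEv : p0 ((E.symm v : W1) : V) = v := by
      have : e (E.symm v) = v := by
        have := E.apply_symm_apply v
        rwa [hE, LinearMap.linearEquivOfInjective_apply] at this
      simpa [he] using this
    rw [hEv] at hd
    simp only [hF, LinearMap.comp_apply, LinearEquiv.coe_coe, Submodule.subtype_apply]
    exact hd
  have hmem : ∀ v : W0, (v : V) + (F v : V) ∈ W1 := fun v => by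
    rw [hkey v]; exact (E.symm v).2
  refine ⟨F, hmem, ?_, fun v => by simp, ?_⟩
  · intro t ht
    constructor
    · intro v w hvw
      simp only at hvw
      have h : ((v : V) - (w : V)) = t • (F w : V) - t • (F v : V) := by
        rw [← sub_eq_zero] at hvw ⊢
        rw [← hvw]; abel
      have hm0 : (v : V) - (w : V) ∈ W0 := sub_mem v.2 w.2
      have hm0' : (v : V) - (w : V) ∈ W0' := by
        rw [h]; exact sub_mem (W0'.smul_mem t (F w).2) (W0'.smul_mem t (F v).2)
      have hz : (v : V) - (w : V) = 0 := by
        have := hcompl.disjoint.le_bot ⟨hm0, hm0'⟩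
        simpa using this
      exact Subtype.ext (by rwa [sub_eq_zero] at hz)
    · intro v
      set x : V := (v : V) with hx
      set y : V := (F v : V) with hy
      have hq_sum : 0 ≤ q (x + y) := hq1 _ (hmem v)
      have ha : 0 ≤ q x := hq0 x v.2
      have hc : q y ≤ 0 := hq0' y (F v).2
      have hpol : q (x + t • y) =
          q x + t * QuadraticMap.polar q x y + t * t * q y := by
        have h1 : QuadraticMap.polar q x (t • y) = q (x + t • y) - q x - q (t • y) := rfl
        have h2 : QuadraticMap.polar q x (t • y) = t * QuadraticMap.polar q x y :=
          QuadraticMap.polar_smul_right q t x y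
        have h3 : q (t • y) = t * t * q y := by
          rw [QuadraticMap.map_smul, smul_eq_mul]
        rw [h3] at h1
        linarith [h1, h2]
      have hsum : QuadraticMap.polar q x y = q (x + y) - q x - q y := rfl
      rw [hpol]
      obtain ⟨ht0, ht1⟩ := ht
      exact aux_quad (q x) (QuadraticMap.polar q x y) (q y) t ha hc
        (by rw [hsum]; linarith) ht0 ht1
  · apply Set.Subset.antisymm
    · rintro x ⟨v, rfl⟩
      simp only [one_smul, SetLike.mem_coe]
      exact hmem v
    · intro w hw
      refine ⟨E ⟨w, hw⟩, ?_⟩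
      have h1 := hkey (E ⟨w, hw⟩)
      rw [E.symm_apply_apply] at h1
      simp only [one_smul]
      rw [h1]
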